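/- For d ≥ 3 and η_d := S_d[cos], the derivative satisfies η_d'(s) = -(s/d) η_{d+2}(s) for all s ≥ 0, and |η_d'(s)| ≤ c_{d+2}/d with η_d'(0) = 0. -/

import Mathlib

/-!
Differentiating under the integral sign gives `η_d'(s) = -∫₀¹ t sin(ts) ϱ_d(t) dt`. The recursion
`Γ(x + 1) = x Γ(x)` gives `(d - 1) c_{d+2} = d c_d`, i.e. `t ϱ_d(t) = -ϱ_{d+2}'(t) / d`, so an
integration by parts (with `ϱ_{d+2}(1) = 0` and `sin 0 = 0`) turns this into `-(s/d) η_{d+2}(s)`.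
The same integration by parts gives `∫₀¹ t ϱ_d = ϱ_{d+2}(0) / d = c_{d+2} / d`, which bounds
`|η_d'|` because `|sin| ≤ 1`.
-/

open MeasureTheory Real Set

noncomputable def c (d : ℕ) : ℝ :=
  2 * Real.Gamma ((d : ℝ) / 2) / (Real.sqrt π * Real.Gamma (((d : ℝ) - 1) / 2))

noncomputable def rho (d : ℕ) (t : ℝ) : ℝ :=
  c d * (1 - t ^ 2) ^ (((d : ℝ) - 3) / 2)

noncomputable def S (d : ℕ) (f : ℝ → ℝ) (s : ℝ) : ℝ :=
  ∫ t in (0:ℝ)..1, f (t * s) * rho d t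

lemma c_pos {d : ℕ} (hd : 2 ≤ d) : 0 < c d := by
  have hd' : (2 : ℝ) ≤ d := by exact_mod_cast hd
  unfold c
  have := Real.Gamma_pos_of_pos (show 0 < (d : ℝ) / 2 by linarith)
  have := Real.Gamma_pos_of_pos (show 0 < ((d : ℝ) - 1) / 2 by linarith)
  positivity

lemma c_add_two {d : ℕ} (hd : 2 ≤ d) : ((d : ℝ) - 1) * c (d + 2) = d * c d := by
  have hd' : (2 : ℝ) ≤ d := by exact_mod_cast hd
  have hΓd : Real.Gamma (((d + 2 : ℕ) : ℝ) / 2) = (d / 2) * Real.Gamma (d / 2) := by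
    rw [← Real.Gamma_add_one (by positivity)]
    congr 1
    push_cast
    ring
  have hΓd' : Real.Gamma ((((d + 2 : ℕ) : ℝ) - 1) / 2)
      = ((d - 1) / 2) * Real.Gamma ((d - 1) / 2) := by
    rw [← Real.Gamma_add_one (by linarith)]
    congr 1
    push_cast
    ring
  have : Real.Gamma (((d : ℝ) - 1) / 2) ≠ 0 := (Real.Gamma_pos_of_pos (by linarith)).ne'
  have : (d : ℝ) - 1 ≠ 0 := by linarith
  have : Real.sqrt π ≠ 0 := (Real.sqrt_pos.mpr Real.pi_pos).ne'
  unfold c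
  rw [hΓd, hΓd']
  field_simp

lemma rho_zero (d : ℕ) : rho d 0 = c d := by
  simp [rho]

lemma rho_add_two_one {d : ℕ} (hd : 2 ≤ d) : rho (d + 2) 1 = 0 := by
  have hd' : (2 : ℝ) ≤ d := by exact_mod_cast hd
  simp only [rho, one_pow, sub_self]
  rw [Real.zero_rpow (by push_cast; linarith), mul_zero]

lemma rho_nonneg {d : ℕ} (hd : 2 ≤ d) {t : ℝ} (ht : t ∈ Icc (-1 : ℝ) 1) : 0 ≤ rho d t := by
  have : 0 ≤ 1 - t ^ 2 := by nlinarith [ht.1, ht.2]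
  exact mul_nonneg (c_pos hd).le (Real.rpow_nonneg this _)

lemma continuous_rho {d : ℕ} (hd : 3 ≤ d) : Continuous (rho d) := by
  have hd' : (3 : ℝ) ≤ d := by exact_mod_cast hd
  exact continuous_const.mul
    ((continuous_const.sub (continuous_pow 2)).rpow_const fun _ => Or.inr (by linarith))

lemma hasDerivAt_rho_add_two {d : ℕ} (hd : 3 ≤ d) (t : ℝ) :
    HasDerivAt (rho (d + 2)) (-(d * (t * rho d t))) t := by
  have hd' : (3 : ℝ) ≤ d := by exact_mod_cast hd
  have hbase : HasDerivAt (fun t : ℝ => 1 - t ^ 2) (-(2 * t)) t := by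
    simpa using (hasDerivAt_pow 2 t).const_sub 1
  have hpow := ((Real.hasDerivAt_rpow_const (p := (((d + 2 : ℕ) : ℝ) - 3) / 2)
    (Or.inr (by push_cast; linarith))).comp t hbase).const_mul (c (d + 2))
  refine (hpow : HasDerivAt (rho (d + 2)) _ t).congr_deriv ?_
  rw [show (((d + 2 : ℕ) : ℝ) - 3) / 2 - 1 = ((d : ℝ) - 3) / 2 by push_cast; ring]
  unfold rho
  push_cast
  linear_combination (-t * (1 - t ^ 2) ^ (((d : ℝ) - 3) / 2)) * c_add_two (by omega : 2 ≤ d)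

section

variable {d : ℕ} {f f' : ℝ → ℝ}

lemma hasDerivAt_S (hd : 3 ≤ d) (hf : ∀ x, HasDerivAt f (f' x) x) (hf' : Continuous f')
    {M : ℝ} (hM : ∀ x, |f' x| ≤ M) (s : ℝ) :
    HasDerivAt (S d f) (∫ t in (0 : ℝ)..1, t * f' (t * s) * rho d t) s := by
  have hρ := continuous_rho hd
  have hf_cont : Continuous f := continuous_iff_continuousAt.2 fun x => (hf x).continuousAt
  have hF : ∀ x, Continuous fun t => f (t * x) * rho d t := fun x =>
    (hf_cont.comp (continuous_id.mul continuous_const)).mul hρ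
  refine (intervalIntegral.hasDerivAt_integral_of_dominated_loc_of_deriv_le
    (F' := fun x t => t * f' (t * x) * rho d t) (bound := fun t => M * |rho d t|)
    Filter.univ_mem (Filter.Eventually.of_forall fun x => (hF x).aestronglyMeasurable)
    ((hF s).intervalIntegrable 0 1)
    ((continuous_id.mul (hf'.comp (continuous_id.mul continuous_const))).mul hρ
      |>.aestronglyMeasurable)
    (Filter.Eventually.of_forall fun t ht x _ => ?_)
    ((continuous_const.mul hρ.abs).intervalIntegrable 0 1)
    (Filter.Eventually.of_forall fun t _ x _ => ?_)).2
  · rw [uIoc_of_le zero_le_one] at ht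
    have ht' : |t| ≤ 1 := abs_le.2 ⟨by linarith [ht.1], ht.2⟩
    rw [Real.norm_eq_abs, abs_mul, abs_mul]
    gcongr
    exact (mul_le_mul ht' (hM _) (abs_nonneg _) zero_le_one).trans_eq (one_mul M)
  · refine (((hf (t * x)).comp x ((hasDerivAt_id x).const_mul t)).mul_const (rho d t)
      |>.congr_deriv ?_)
    ring

lemma mul_integral_mul_mul_rho (hd : 3 ≤ d) (hf : ∀ x, HasDerivAt f (f' x) x)
    (hf' : Continuous f') (s : ℝ) :
    d * ∫ t in (0 : ℝ)..1, t * f (t * s) * rho d t = f 0 * c (d + 2) + s * S (d + 2) f' s := by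
  have hparts := intervalIntegral.integral_mul_deriv_eq_deriv_mul
    (u := fun t => f (t * s)) (u' := fun t => f' (t * s) * s)
    (fun t _ => (hf (t * s)).comp t (hasDerivAt_mul_const s))
    (fun t _ => hasDerivAt_rho_add_two hd t)
    (((hf'.comp (continuous_id.mul continuous_const)).mul continuous_const).intervalIntegrable 0 1)
    ((continuous_const.mul (continuous_id.mul (continuous_rho hd))).neg.intervalIntegrable 0 1)
  simp only [zero_mul, one_mul, rho_zero, rho_add_two_one (by omega : 2 ≤ d), mul_zero,
    zero_sub] at hparts
  have hlhs : ∫ t in (0 : ℝ)..1, f (t * s) * -(d * (t * rho d t))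
      = -(d * ∫ t in (0 : ℝ)..1, t * f (t * s) * rho d t) := by
    rw [← intervalIntegral.integral_const_mul, ← intervalIntegral.integral_neg]
    congr 1 with t
    ring
  have hrhs : ∫ t in (0 : ℝ)..1, f' (t * s) * s * rho (d + 2) t = s * S (d + 2) f' s := by
    rw [S, ← intervalIntegral.integral_const_mul]
    congr 1 with t
    ring
  rw [hlhs, hrhs] at hparts
  linarith

lemma integral_mul_rho (hd : 3 ≤ d) : ∫ t in (0 : ℝ)..1, t * rho d t = c (d + 2) / d := by
  have h := mul_integral_mul_mul_rho hd (f := fun _ => 1) (f' := fun _ => 0)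
    (fun _ => hasDerivAt_const _ _) continuous_const 0
  have hd' : (d : ℝ) ≠ 0 := by exact_mod_cast (by omega : d ≠ 0)
  simp only [mul_one, zero_mul, add_zero, one_mul] at h
  rw [eq_div_iff hd', mul_comm, h]

lemma abs_integral_mul_mul_rho_le (hd : 3 ≤ d) (hf : Continuous f) {M : ℝ}
    (hM : ∀ x, |f x| ≤ M) (s : ℝ) :
    |∫ t in (0 : ℝ)..1, t * f (t * s) * rho d t| ≤ M * (c (d + 2) / d) := by
  have hρ := continuous_rho hd
  have hd2 : 2 ≤ d := by omega
  rw [← integral_mul_rho hd, ← intervalIntegral.integral_const_mul]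
  refine (intervalIntegral.abs_integral_le_integral_abs zero_le_one).trans
    (intervalIntegral.integral_mono_on zero_le_one
      (((continuous_id.mul (hf.comp (continuous_id.mul continuous_const))).mul hρ).abs
        |>.intervalIntegrable 0 1)
      ((continuous_const.mul (continuous_id.mul hρ)).intervalIntegrable 0 1) fun t ht => ?_)
  have hρt := rho_nonneg hd2 ⟨by linarith [ht.1], ht.2⟩
  rw [abs_mul, abs_mul, abs_of_nonneg ht.1, abs_of_nonneg hρt]
  have := mul_nonneg ht.1 hρt
  nlinarith [hM (t * s)]

end

theorem eta_deriv (d : ℕ) (hd : 3 ≤ d) :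
    (∀ s : ℝ, 0 ≤ s → deriv (S d Real.cos) s = -(s / d) * S (d + 2) Real.cos s) ∧
    (∀ s : ℝ, 0 ≤ s → |deriv (S d Real.cos) s| ≤ c (d + 2) / d) ∧
    deriv (S d Real.cos) 0 = 0 := by
  have hd' : (d : ℝ) ≠ 0 := by exact_mod_cast (by omega : d ≠ 0)
  have hderiv (s : ℝ) :
      deriv (S d Real.cos) s = ∫ t in (0 : ℝ)..1, t * -Real.sin (t * s) * rho d t :=
    (hasDerivAt_S hd Real.hasDerivAt_cos Real.continuous_sin.neg
      (fun x => by rw [abs_neg]; exact Real.abs_sin_le_one x) s).deriv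
  have hformula (s : ℝ) : deriv (S d Real.cos) s = -(s / d) * S (d + 2) Real.cos s := by
    have h := mul_integral_mul_mul_rho hd Real.hasDerivAt_sin Real.continuous_cos s
    rw [Real.sin_zero, zero_mul, zero_add, mul_comm, ← eq_div_iff hd'] at h
    calc deriv (S d Real.cos) s = -∫ t in (0 : ℝ)..1, t * Real.sin (t * s) * rho d t := by
          simp only [hderiv, mul_neg, neg_mul, intervalIntegral.integral_neg]
      _ = -(s / d) * S (d + 2) Real.cos s := by rw [h]; ring
  refine ⟨fun s _ => hformula s, fun s _ => ?_, by simp [hformula]⟩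
  simpa [hderiv] using abs_integral_mul_mul_rho_le hd Real.continuous_sin.neg (M := 1)
    (fun x => by simpa using Real.abs_sin_le_one x) s
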